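/- Shishkin-type decomposition of the semidiscrete solution: in the setting of the layer-adapted derivative bounds for the semidiscrete solution, suppose û^{n+1} ∈ C^6([0,1])^M satisfies |d^k û^{n+1}_j(x)/dx^k| ≤ C₀(1 + ε^{−k/2} B_ε(x)) for 0 ≤ k ≤ 6 and all components j. Set x* = 4√(ε/β) · ln(1/√ε) and assume x* ≤ 1/4. Then there exist v̂^{n+1}, ŵ^{n+1} : [0,1] → ℝ^M with û^{n+1} = v̂^{n+1} + ŵ^{n+1}, where v̂^{n+1} equals û^{n+1} on [x*, 1−x*] and equals its degree-4 Taylor polynomials at x* and 1−x* on [0,x*] and [1−x*,1] respectively, and there is a constant C independent of ε and Δt such that for 0 ≤ m ≤ 6, every component k, and every x ∈ [0,1] \ {x*, 1−x*}: |d^m v̂^{n+1}_k(x)/dx^m| ≤ C(1 + ε^{2−m/2}) and |d^m ŵ^{n+1}_k(x)/dx^m| ≤ C ε^{−m/2} B_ε(x). -/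

import Mathlib

/-- The boundary-layer function `B_ε(x) = e^{-x√(β/ε)} + e^{-(1-x)√(β/ε)}`. -/
noncomputable def Bfun (β ε x : ℝ) : ℝ :=
  Real.exp (-x * Real.sqrt (β/ε)) + Real.exp (-(1-x) * Real.sqrt (β/ε))

open Finset Real Set Filter Topology

/-!
With `s = √(β/ε)`, the transition point `x* = 4 √(ε/β) ln (1/√ε)` satisfies `e^{-s x*} = ε²`.
Hence `B_ε ≤ 2ε²` on `[x*, 1 - x*]`, where `v̂ = û` and `ŵ = 0`, so there the assumed bound on
`û⁽ᵐ⁾` is `O(1 + ε^{2-m/2})`; and `B_ε ≥ ε²` outside it, so there the constant term of the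
assumed bound is dominated by `ε^{-m/2} B_ε` once `m ≥ 4`.

On `[0, x*)` the Taylor coefficients `û⁽ᵛ⁾(x*)`, `ν ≤ 4`, are `O(1)`, which bounds `v̂`. The
remainder `ŵ = û - T₄û` has vanishing derivatives of order `≤ 4` at `x*` and
`|ŵ⁽⁵⁾(t)| = |û⁽⁵⁾(t)| ≲ ε^{-5/2} e^{-st}`; integrating `5 - m` times from `x*` gives
`|ŵ⁽ᵐ⁾(x)| ≲ ε^{-5/2} s^{m-5} e^{-sx} = β^{(m-5)/2} ε^{-m/2} e^{-sx}`, while `ŵ⁽⁶⁾ = û⁽⁶⁾`.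
The right layer follows by the reflection `x ↦ 1 - x`, which preserves `B_ε`.
-/

theorem abs_le_div_mul_exp_of_hasDerivAt {φ φ' : ℝ → ℝ} {a s B x : ℝ} (hs : 0 < s)
    (hxa : x ≤ a) (hφ : ∀ t, HasDerivAt φ (φ' t) t) (hφ' : Continuous φ') (ha : φ a = 0)
    (hbound : ∀ t ∈ Icc x a, |φ' t| ≤ B * exp (-t * s)) :
    |φ x| ≤ B / s * exp (-x * s) := by
  have hB : 0 ≤ B :=
    nonneg_of_mul_nonneg_left ((abs_nonneg _).trans (hbound a ⟨hxa, le_rfl⟩)) (exp_pos _)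
  have hexp : ∀ t, HasDerivAt (fun u => -(B / s * exp (-u * s))) (B * exp (-t * s)) t := by
    intro t
    have hlin : HasDerivAt (fun u : ℝ => -u * s) (-s) t := by
      simpa using (hasDerivAt_id t).neg.mul_const s
    refine (hlin.exp.const_mul (B / s)).fun_neg.congr_deriv ?_
    field_simp
  calc |φ x| = |∫ t in x..a, φ' t| := by
        rw [intervalIntegral.integral_eq_sub_of_hasDerivAt (fun t _ => hφ t)
          (hφ'.intervalIntegrable _ _), ha, zero_sub, abs_neg]
    _ ≤ ∫ t in x..a, |φ' t| := intervalIntegral.abs_integral_le_integral_abs hxa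
    _ ≤ ∫ t in x..a, B * exp (-t * s) :=
        intervalIntegral.integral_mono_on hxa (hφ'.abs.intervalIntegrable _ _)
          ((by fun_prop : Continuous fun t => B * exp (-t * s)).intervalIntegrable _ _) hbound
    _ = B / s * (exp (-x * s) - exp (-a * s)) := by
        rw [intervalIntegral.integral_eq_sub_of_hasDerivAt (fun t _ => hexp t)
          ((by fun_prop : Continuous fun t => B * exp (-t * s)).intervalIntegrable _ _)]
        ring
    _ ≤ B / s * exp (-x * s) := by
        gcongr
        linarith [exp_pos (-a * s)]

theorem abs_iteratedDeriv_le_of_iteratedDeriv_eq_zero {g : ℝ → ℝ} {n : ℕ}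
    (hg : ContDiff ℝ n g) {a s A x : ℝ} (hs : 0 < s) (hxa : x ≤ a)
    (hzero : ∀ k < n, iteratedDeriv k g a = 0)
    (hbound : ∀ t ∈ Icc x a, |iteratedDeriv n g t| ≤ A * exp (-t * s))
    {m : ℕ} (hm : m ≤ n) :
    |iteratedDeriv m g x| ≤ A / s ^ (n - m) * exp (-x * s) := by
  suffices key : ∀ i ≤ n, ∀ t ∈ Icc x a,
      |iteratedDeriv (n - i) g t| ≤ A / s ^ i * exp (-t * s) by
    simpa [Nat.sub_sub_self hm] using key (n - m) (Nat.sub_le n m) x ⟨le_rfl, hxa⟩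
  intro i
  induction i with
  | zero => simpa using hbound
  | succ i ih =>
    intro hi t ht
    obtain ⟨k, rfl⟩ : ∃ k, n = k + (i + 1) := ⟨n - (i + 1), by omega⟩
    have hderiv : ∀ u, HasDerivAt (iteratedDeriv k g) (iteratedDeriv (k + 1) g u) u := by
      intro u
      rw [iteratedDeriv_succ]
      exact ((hg.differentiable_iteratedDeriv k (by norm_cast; omega)) u).hasDerivAt
    have hcont : Continuous (iteratedDeriv (k + 1) g) :=
      hg.continuous_iteratedDeriv _ (by norm_cast; omega)
    have hstep := abs_le_div_mul_exp_of_hasDerivAt hs ht.2 hderiv hcont (hzero k (by omega))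
      fun u hu => by
        simpa [show k + (i + 1) - i = k + 1 by omega] using
          ih (by omega) u ⟨ht.1.trans hu.1, hu.2⟩
    simpa [show k + (i + 1) - (i + 1) = k by omega, pow_succ, div_div] using hstep

/-- `taylorPoly f c n` is the Taylor polynomial of `f` at `c` of degree `n - 1`. -/
noncomputable def taylorPoly (f : ℝ → ℝ) (c : ℝ) (n : ℕ) (x : ℝ) : ℝ :=
  ∑ ν ∈ range n, (x - c) ^ ν / (ν.factorial : ℝ) * iteratedDeriv ν f c

namespace taylorPoly

variable {f : ℝ → ℝ} {c : ℝ} {n : ℕ}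

theorem contDiff {k : WithTop ℕ∞} : ContDiff ℝ k (taylorPoly f c n) := by
  unfold taylorPoly; fun_prop

theorem iteratedDeriv_eq (m : ℕ) (x : ℝ) :
    iteratedDeriv m (taylorPoly f c n) x = ∑ ν ∈ range n,
      ν.descFactorial m * (x - c) ^ (ν - m) / (ν.factorial : ℝ) * iteratedDeriv ν f c := by
  unfold taylorPoly
  rw [iteratedDeriv_fun_sum fun ν _ => by fun_prop]
  refine sum_congr rfl fun ν _ => ?_
  rw [iteratedDeriv_mul_const_field (fun x => (x - c) ^ ν / (ν.factorial : ℝ)),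
    iteratedDeriv_div_const, iteratedDeriv_comp_sub_const _ (· ^ ν)]
  simp only [iteratedDeriv_pow]

theorem iteratedDeriv_self {m : ℕ} (hm : m < n) :
    iteratedDeriv m (taylorPoly f c n) c = iteratedDeriv m f c := by
  rw [iteratedDeriv_eq, sum_eq_single_of_mem m (mem_range.mpr hm)]
  · simp [Nat.descFactorial_self, (Nat.factorial_pos m).ne']
  · intro ν _ hνm
    rcases hνm.lt_or_gt with h | h
    · simp [Nat.descFactorial_eq_zero_iff_lt.mpr h]
    · simp [Nat.sub_ne_zero_of_lt h]

theorem iteratedDeriv_eq_zero {m : ℕ} (hm : n ≤ m) (x : ℝ) :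
    iteratedDeriv m (taylorPoly f c n) x = 0 := by
  rw [iteratedDeriv_eq]
  exact sum_eq_zero fun ν hν => by
    simp [Nat.descFactorial_eq_zero_iff_lt.mpr ((mem_range.mp hν).trans_le hm)]

theorem apply_self (hn : 0 < n) : taylorPoly f c n c = f c := by
  simpa using iteratedDeriv_self (f := f) (c := c) hn

theorem abs_iteratedDeriv_le {D : ℝ} (hD : ∀ ν < n, |iteratedDeriv ν f c| ≤ D)
    (m : ℕ) {x : ℝ} (hx : |x - c| ≤ 1) :
    |iteratedDeriv m (taylorPoly f c n) x| ≤ n * D := by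
  rw [iteratedDeriv_eq]
  have hterm : ∀ ν ∈ range n,
      |ν.descFactorial m * (x - c) ^ (ν - m) / (ν.factorial : ℝ) * iteratedDeriv ν f c|
        ≤ D := by
    intro ν hν
    have hdesc : (ν.descFactorial m : ℝ) / ν.factorial ≤ 1 := by
      rw [div_le_one (by positivity)]
      rcases le_or_gt m ν with h | h
      · exact_mod_cast Nat.factorial_mul_descFactorial h ▸
          Nat.le_mul_of_pos_left _ (Nat.factorial_pos _)
      · simp [Nat.descFactorial_eq_zero_iff_lt.mpr h]
    calc |ν.descFactorial m * (x - c) ^ (ν - m) / (ν.factorial : ℝ) * iteratedDeriv ν f c|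
        = (ν.descFactorial m : ℝ) / ν.factorial * |x - c| ^ (ν - m)
            * |iteratedDeriv ν f c| := by
          rw [abs_mul, abs_div, abs_mul, abs_pow, Nat.abs_cast, Nat.abs_cast]; ring
      _ ≤ 1 * 1 * D := by
          gcongr
          · exact pow_le_one₀ (abs_nonneg _) hx
          · exact hD ν (mem_range.mp hν)
      _ = D := by ring
  calc _ ≤ _ := abs_sum_le_sum_abs _ _
    _ ≤ ∑ _ν ∈ range n, D := sum_le_sum hterm
    _ = n * D := by simp

theorem comp_const_sub (a x : ℝ) :
    taylorPoly (fun y => f (c - y)) a n (c - x) = taylorPoly f (c - a) n x := by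
  unfold taylorPoly
  refine sum_congr rfl fun ν _ => ?_
  simp only [iteratedDeriv_comp_const_sub, smul_eq_mul]
  rw [show c - x - a = (-1) * (x - (c - a)) by ring, mul_pow]
  have hsign : ((-1 : ℝ) ^ ν) ^ 2 = 1 := by rw [← pow_mul, mul_comm, pow_mul]; norm_num
  linear_combination (x - (c - a)) ^ ν / ν.factorial * iteratedDeriv ν f (c - a) * hsign

theorem iteratedDeriv_sub_of_le {k : ℕ} (hf : ContDiff ℝ k f) (hnk : n ≤ k)
    (x : ℝ) : iteratedDeriv k (fun y => f y - taylorPoly f c n y) x = iteratedDeriv k f x := by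
  rw [show (fun y => f y - taylorPoly f c n y) = f - taylorPoly f c n from rfl,
    iteratedDeriv_sub hf.contDiffAt contDiff.contDiffAt,
    iteratedDeriv_eq_zero hnk, sub_zero]

theorem iteratedDeriv_sub_self {k : ℕ} (hf : ContDiff ℝ n f) (hk : k < n) :
    iteratedDeriv k (fun y => f y - taylorPoly f c n y) c = 0 := by
  rw [show (fun y => f y - taylorPoly f c n y) = f - taylorPoly f c n from rfl,
    iteratedDeriv_sub (hf.of_le (by exact_mod_cast hk.le)).contDiffAt contDiff.contDiffAt,
    iteratedDeriv_self hk, sub_self]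

theorem abs_iteratedDeriv_sub_le (hf : ContDiff ℝ n f) {s A x : ℝ} (hs : 0 < s) (hxc : x ≤ c)
    (hbound : ∀ t ∈ Icc x c, |iteratedDeriv n f t| ≤ A * exp (-t * s))
    {m : ℕ} (hm : m ≤ n) :
    |iteratedDeriv m (fun y => f y - taylorPoly f c n y) x| ≤ A / s ^ (n - m) * exp (-x * s) :=
  abs_iteratedDeriv_le_of_iteratedDeriv_eq_zero (hf.sub contDiff) hs hxc
    (fun _ hk => iteratedDeriv_sub_self hf hk)
    (fun t ht => (iteratedDeriv_sub_of_le hf le_rfl t).symm ▸ hbound t ht) hm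

end taylorPoly

theorem rpow_div_sqrt_div_pow {ε : ℝ} (hε : 0 < ε) (β r : ℝ) (i : ℕ) :
    ε ^ r / √(β / ε) ^ i = ε ^ (r + i / 2) * ((√β)⁻¹) ^ i := by
  have hsqrt : √ε ^ i = ε ^ ((i : ℝ) / 2) := by
    rw [sqrt_eq_rpow, ← rpow_natCast, ← rpow_mul hε.le]; ring_nf
  rw [sqrt_div' _ hε.le, div_pow, hsqrt, rpow_add hε, inv_pow]
  field_simp

/-- The point `x*`, chosen so that `exp (-x* √(β/ε)) = ε²`. -/
noncomputable def transitionPoint (β ε : ℝ) : ℝ :=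
  4 * Real.sqrt (ε / β) * Real.log (1 / Real.sqrt ε)

theorem Bfun_pos (β ε x : ℝ) : 0 < Bfun β ε x := by
  unfold Bfun; positivity

theorem Bfun_one_sub (β ε x : ℝ) : Bfun β ε (1 - x) = Bfun β ε x := by
  unfold Bfun; rw [sub_sub_cancel, add_comm]

theorem exp_le_Bfun (β ε x : ℝ) : exp (-x * √(β / ε)) ≤ Bfun β ε x :=
  le_add_of_nonneg_right (exp_pos _).le

section BoundaryLayer

variable {β ε : ℝ}

theorem exp_neg_mul_sqrt_le_of_le {x y : ℝ} (hxy : x ≤ y) :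
    exp (-y * √(β / ε)) ≤ exp (-x * √(β / ε)) := by
  gcongr

theorem Bfun_le_two_mul_exp {x : ℝ} (hx : x ≤ 1 / 2) :
    Bfun β ε x ≤ 2 * exp (-x * √(β / ε)) := by
  have := exp_neg_mul_sqrt_le_of_le (β := β) (ε := ε) (show x ≤ 1 - x by linarith)
  unfold Bfun; linarith

theorem transitionPoint_nonneg (hε : 0 < ε) (hε1 : ε ≤ 1) : 0 ≤ transitionPoint β ε := by
  unfold transitionPoint
  have : 1 ≤ 1 / √ε := by
    rw [le_div_iff₀ (sqrt_pos.mpr hε), one_mul]; exact sqrt_le_one.mpr hε1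
  have := log_nonneg this
  positivity

theorem exp_neg_transitionPoint_mul (hβ : 0 < β) (hε : 0 < ε) :
    exp (-transitionPoint β ε * √(β / ε)) = ε ^ 2 := by
  have hsqrt : √(ε / β) * √(β / ε) = 1 := by
    rw [← sqrt_mul (div_nonneg hε.le hβ.le), div_mul_div_comm, mul_comm ε β,
      div_self (by positivity), sqrt_one]
  have hlog : log (1 / √ε) = -(log ε / 2) := by rw [one_div, log_inv, log_sqrt hε.le]
  have hprod : -transitionPoint β ε * √(β / ε) = log (ε ^ 2) := by
    rw [log_pow, transitionPoint, hlog]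
    linear_combination (2 * log ε) * hsqrt
  rw [hprod, exp_log (by positivity)]

theorem sq_le_Bfun_of_le_transitionPoint (hβ : 0 < β) (hε : 0 < ε) {x : ℝ}
    (hx : x ≤ transitionPoint β ε) : ε ^ 2 ≤ Bfun β ε x := by
  rw [← exp_neg_transitionPoint_mul hβ hε]
  exact (exp_neg_mul_sqrt_le_of_le hx).trans (exp_le_Bfun β ε x)

theorem Bfun_le_of_mem_Icc (hβ : 0 < β) (hε : 0 < ε) {x : ℝ}
    (hx : x ∈ Icc (transitionPoint β ε) (1 - transitionPoint β ε)) :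
    Bfun β ε x ≤ 2 * ε ^ 2 := by
  rw [← exp_neg_transitionPoint_mul hβ hε]
  have h1 := exp_neg_mul_sqrt_le_of_le (β := β) (ε := ε) hx.1
  have h2 := exp_neg_mul_sqrt_le_of_le (β := β) (ε := ε)
    (show transitionPoint β ε ≤ 1 - x by linarith [hx.2])
  unfold Bfun; linarith

end BoundaryLayer

noncomputable def regularPart (f : ℝ → ℝ) (a x : ℝ) : ℝ :=
  if x < a then taylorPoly f a 5 x else if x ≤ 1 - a then f x else taylorPoly f (1 - a) 5 x

namespace regularPart

variable {f : ℝ → ℝ} {a x : ℝ}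

theorem eq_taylorPoly_of_le (ha : a ≤ 1 - a) (hx : x ≤ a) :
    regularPart f a x = taylorPoly f a 5 x := by
  unfold regularPart
  rcases hx.lt_or_eq with hx | rfl
  · rw [if_pos hx]
  · rw [if_neg (lt_irrefl x), if_pos ha, taylorPoly.apply_self (by norm_num)]

theorem eq_of_mem_Icc (hx : x ∈ Icc a (1 - a)) : regularPart f a x = f x := by
  unfold regularPart
  rw [if_neg (not_lt.mpr hx.1), if_pos hx.2]

theorem eq_taylorPoly_of_ge (ha : a ≤ 1 - a) (hx : 1 - a ≤ x) :
    regularPart f a x = taylorPoly f (1 - a) 5 x := by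
  unfold regularPart
  rcases hx.lt_or_eq with hx | rfl
  · rw [if_neg (by linarith), if_neg (by linarith)]
  · rw [if_neg (by linarith), if_pos le_rfl, taylorPoly.apply_self (by norm_num)]

theorem comp_one_sub (ha : a ≤ 1 - a) (x : ℝ) :
    regularPart (fun y => f (1 - y)) a (1 - x) = regularPart f a x := by
  rcases lt_or_ge x a with hxa | hxa
  · rw [eq_taylorPoly_of_ge ha (by linarith), taylorPoly.comp_const_sub, sub_sub_cancel,
      eq_taylorPoly_of_le ha hxa.le]
  rcases le_or_gt x (1 - a) with hxb | hxb
  · rw [eq_of_mem_Icc ⟨by linarith, by linarith⟩, eq_of_mem_Icc ⟨hxa, hxb⟩, sub_sub_cancel]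
  · rw [eq_taylorPoly_of_le ha (by linarith), taylorPoly.comp_const_sub,
      eq_taylorPoly_of_ge ha hxb.le]

end regularPart

def HasLayerBounds (β ε C₀ : ℝ) (f : ℝ → ℝ) : Prop :=
  ∀ k : ℕ, k ≤ 6 → ∀ x ∈ Icc (0:ℝ) 1,
    |iteratedDeriv k f x| ≤ C₀ * (1 + ε ^ (-(k:ℝ)/2) * Bfun β ε x)

/-- `20 = 5 · 4`: five Taylor coefficients, each at most `4 C₀`; the power of `1 + β^{-1/2}`
absorbs the factor `β^{-(5-m)/2}` left over from `√(ε/β)^(5-m)` in the layer estimate. -/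
noncomputable def layerConst (β C₀ : ℝ) : ℝ := 20 * C₀ * (1 + (√β)⁻¹) ^ 5

theorem one_le_layerConst_factor (β : ℝ) : 1 ≤ (1 + (√β)⁻¹) ^ 5 :=
  one_le_pow₀ (le_add_of_nonneg_right (by positivity))

namespace HasLayerBounds

variable {β ε C₀ : ℝ} {f : ℝ → ℝ}

theorem nonneg (hf : HasLayerBounds β ε C₀ f) : 0 ≤ C₀ :=
  nonneg_of_mul_nonneg_left ((abs_nonneg _).trans (hf 0 (by norm_num) 0 (by norm_num)))
    (by simpa using (Bfun_pos β ε 0).trans (lt_one_add _))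

theorem comp_one_sub (hf : HasLayerBounds β ε C₀ f) :
    HasLayerBounds β ε C₀ (fun x => f (1 - x)) := by
  intro k hk x hx
  simpa [iteratedDeriv_comp_const_sub, abs_mul, Bfun_one_sub] using
    hf k hk (1 - x) ⟨by linarith [hx.2], by linarith [hx.1]⟩

theorem abs_iteratedDeriv_le_of_mem_Icc (hf : HasLayerBounds β ε C₀ f) (hβ : 0 < β)
    (hε : 0 < ε) (hε1 : ε ≤ 1) {k : ℕ} (hk : k ≤ 6) {x : ℝ}
    (hx : x ∈ Icc (transitionPoint β ε) (1 - transitionPoint β ε)) :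
    |iteratedDeriv k f x| ≤ 2 * C₀ * (1 + ε ^ ((2:ℝ) - k / 2)) := by
  have ha := transitionPoint_nonneg (β := β) hε hε1
  have hB : ε ^ (-(k:ℝ)/2) * Bfun β ε x ≤ 2 * ε ^ ((2:ℝ) - k / 2) := by
    calc ε ^ (-(k:ℝ)/2) * Bfun β ε x ≤ ε ^ (-(k:ℝ)/2) * (2 * ε ^ (2:ℝ)) := by
          rw [rpow_two]; gcongr; exact Bfun_le_of_mem_Icc hβ hε hx
      _ = 2 * ε ^ ((2:ℝ) - k / 2) := by
          rw [mul_left_comm, ← rpow_add hε]; ring_nf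
  have := hf.nonneg
  have := rpow_pos_of_pos hε ((2:ℝ) - k / 2)
  nlinarith [hf k hk x ⟨by linarith [hx.1], by linarith [hx.2]⟩]

theorem abs_iteratedDeriv_le_of_sq_le_Bfun (hf : HasLayerBounds β ε C₀ f) (hε : 0 < ε)
    (hε1 : ε ≤ 1) {k : ℕ} (hk4 : 4 ≤ k) (hk : k ≤ 6) {x : ℝ} (hx : x ∈ Icc (0:ℝ) 1)
    (hB : ε ^ 2 ≤ Bfun β ε x) :
    |iteratedDeriv k f x| ≤ 2 * C₀ * ε ^ (-(k:ℝ)/2) * Bfun β ε x := by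
  have hone : 1 ≤ ε ^ (-(k:ℝ)/2) * Bfun β ε x :=
    calc (1:ℝ) = ε ^ (-(2:ℝ)) * ε ^ (2:ℝ) := by rw [← rpow_add hε]; norm_num
      _ ≤ ε ^ (-(k:ℝ)/2) * Bfun β ε x := by
          have hk' : (4:ℝ) ≤ k := by exact_mod_cast hk4
          rw [rpow_two]
          exact mul_le_mul (rpow_le_rpow_of_exponent_ge hε hε1 (by linarith)) hB
            (by positivity) (by positivity)
  have := hf.nonneg
  nlinarith [hf k hk x hx]

theorem abs_iteratedDeriv_taylorPoly_le (hf : HasLayerBounds β ε C₀ f) (hβ : 0 < β)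
    (hε : 0 < ε) (hε1 : ε ≤ 1) (ha : transitionPoint β ε ≤ 1 / 4) (m : ℕ) {x : ℝ}
    (hx : x ∈ Icc 0 (transitionPoint β ε)) :
    |iteratedDeriv m (taylorPoly f (transitionPoint β ε) 5) x|
      ≤ layerConst β C₀ * (1 + ε ^ ((2:ℝ) - m / 2)) := by
  have ha0 := transitionPoint_nonneg (β := β) hε hε1
  have hcoef : ∀ ν < 5, |iteratedDeriv ν f (transitionPoint β ε)| ≤ 4 * C₀ := by
    intro ν hν
    have hν' : (ν:ℝ) ≤ 4 := by exact_mod_cast Nat.le_of_lt_succ hν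
    have hpow : ε ^ ((2:ℝ) - ν / 2) ≤ 1 := rpow_le_one hε.le hε1 (by linarith)
    have := hf.nonneg
    nlinarith [hf.abs_iteratedDeriv_le_of_mem_Icc hβ hε hε1 (k := ν) (by omega)
      ⟨le_rfl, by linarith⟩]
  have hxa : |x - transitionPoint β ε| ≤ 1 := by
    rw [abs_le]; constructor <;> linarith [hx.1, hx.2]
  have hpoly := taylorPoly.abs_iteratedDeriv_le hcoef m hxa
  have := hf.nonneg
  calc _ ≤ (5 : ℕ) * (4 * C₀) := hpoly
    _ = 20 * C₀ * 1 * 1 := by push_cast; ring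
    _ ≤ layerConst β C₀ * (1 + ε ^ ((2:ℝ) - m / 2)) := by
        unfold layerConst
        gcongr
        · exact one_le_layerConst_factor β
        · exact le_add_of_nonneg_right (rpow_nonneg hε.le _)

theorem abs_iteratedDeriv_sub_taylorPoly_le (hf : HasLayerBounds β ε C₀ f)
    (hf6 : ContDiff ℝ 6 f) (hβ : 0 < β) (hε : 0 < ε) (hε1 : ε ≤ 1)
    (ha : transitionPoint β ε ≤ 1 / 4) {m : ℕ} (hm : m ≤ 6) {x : ℝ}
    (hx : x ∈ Icc 0 (transitionPoint β ε)) :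
    |iteratedDeriv m (fun y => f y - taylorPoly f (transitionPoint β ε) 5 y) x|
      ≤ layerConst β C₀ * ε ^ (-(m:ℝ)/2) * Bfun β ε x := by
  set a := transitionPoint β ε
  have hC₀ := hf.nonneg
  have hK := one_le_layerConst_factor β
  have hx01 : x ∈ Icc (0:ℝ) 1 := ⟨hx.1, by linarith [hx.2]⟩
  rcases (show m ≤ 5 ∨ m = 6 by omega) with hm5 | rfl
  · set s := √(β / ε)
    have hs : 0 < s := sqrt_pos.mpr (div_pos hβ hε)
    have hbound : ∀ t ∈ Icc x a,
        |iteratedDeriv 5 f t| ≤ 4 * C₀ * ε ^ (-(5:ℝ)/2) * exp (-t * s) := by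
      intro t ht
      have hlayer := hf.abs_iteratedDeriv_le_of_sq_le_Bfun hε hε1 (k := 5)
        (by norm_num) (by norm_num)
        ⟨hx.1.trans ht.1, by linarith [ht.2]⟩ (sq_le_Bfun_of_le_transitionPoint hβ hε ht.2)
      have := Bfun_le_two_mul_exp (β := β) (ε := ε) (show t ≤ 1 / 2 by linarith [ht.2])
      push_cast at hlayer
      calc _ ≤ 2 * C₀ * ε ^ (-(5:ℝ)/2) * Bfun β ε t := hlayer
        _ ≤ 2 * C₀ * ε ^ (-(5:ℝ)/2) * (2 * exp (-t * s)) := by gcongr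
        _ = _ := by ring
    have hrem := taylorPoly.abs_iteratedDeriv_sub_le (hf6.of_le (by norm_num)) hs hx.2 hbound hm5
    have hscale :
        ε ^ (-(5:ℝ)/2) / s ^ (5 - m) = ε ^ (-(m:ℝ)/2) * ((√β)⁻¹) ^ (5 - m) := by
      rw [rpow_div_sqrt_div_pow hε, Nat.cast_sub hm5]; ring_nf
    have hβpow : ((√β)⁻¹) ^ (5 - m) ≤ (1 + (√β)⁻¹) ^ 5 :=
      calc ((√β)⁻¹) ^ (5 - m) ≤ (1 + (√β)⁻¹) ^ (5 - m) := by gcongr; linarith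
        _ ≤ (1 + (√β)⁻¹) ^ 5 := pow_le_pow_right₀ (by simp) (by omega)
    calc _ ≤ 4 * C₀ * ε ^ (-(5:ℝ)/2) / s ^ (5 - m) * exp (-x * s) := hrem
      _ = 4 * C₀ * ((√β)⁻¹) ^ (5 - m) * ε ^ (-(m:ℝ)/2) * exp (-x * s) := by
          rw [mul_div_assoc, hscale]; ring
      _ ≤ layerConst β C₀ * ε ^ (-(m:ℝ)/2) * Bfun β ε x := by
          unfold layerConst
          gcongr
          · linarith
          · exact exp_le_Bfun β ε x
  · rw [taylorPoly.iteratedDeriv_sub_of_le hf6 (by norm_num)]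
    have hlayer := hf.abs_iteratedDeriv_le_of_sq_le_Bfun hε hε1 (k := 6) (by norm_num) le_rfl
      hx01 (sq_le_Bfun_of_le_transitionPoint hβ hε hx.2)
    calc _ ≤ 2 * C₀ * ε ^ (-((6:ℕ):ℝ)/2) * Bfun β ε x := hlayer
      _ ≤ layerConst β C₀ * ε ^ (-((6:ℕ):ℝ)/2) * Bfun β ε x := by
          have := Bfun_pos β ε x
          unfold layerConst
          gcongr ?_ * _ * _
          nlinarith

theorem abs_iteratedDeriv_regularPart_le_of_lt (hf : HasLayerBounds β ε C₀ f)
    (hf6 : ContDiff ℝ 6 f) (hβ : 0 < β) (hε : 0 < ε) (hε1 : ε ≤ 1)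
    (ha : transitionPoint β ε ≤ 1 / 4) {m : ℕ} (hm : m ≤ 6) {x : ℝ} (hx0 : 0 ≤ x)
    (hxa : x < transitionPoint β ε) :
    |iteratedDeriv m (regularPart f (transitionPoint β ε)) x|
        ≤ layerConst β C₀ * (1 + ε ^ ((2:ℝ) - m / 2)) ∧
      |iteratedDeriv m (fun y => f y - regularPart f (transitionPoint β ε) y) x|
        ≤ layerConst β C₀ * ε ^ (-(m:ℝ)/2) * Bfun β ε x := by
  set a := transitionPoint β ε
  have hv : regularPart f a =ᶠ[𝓝 x] taylorPoly f a 5 := by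
    filter_upwards [Iio_mem_nhds hxa] with y hy using if_pos hy
  have hw : (fun y => f y - regularPart f a y) =ᶠ[𝓝 x] fun y => f y - taylorPoly f a 5 y :=
    hv.mono fun y hy => by simp only [hy]
  rw [hv.iteratedDeriv_eq, hw.iteratedDeriv_eq]
  exact ⟨hf.abs_iteratedDeriv_taylorPoly_le hβ hε hε1 ha m ⟨hx0, hxa.le⟩,
    hf.abs_iteratedDeriv_sub_taylorPoly_le hf6 hβ hε hε1 ha hm ⟨hx0, hxa.le⟩⟩

theorem abs_iteratedDeriv_regularPart_le_of_mem_Ioo (hf : HasLayerBounds β ε C₀ f)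
    (hβ : 0 < β) (hε : 0 < ε) (hε1 : ε ≤ 1) {m : ℕ} (hm : m ≤ 6) {x : ℝ}
    (hx : x ∈ Ioo (transitionPoint β ε) (1 - transitionPoint β ε)) :
    |iteratedDeriv m (regularPart f (transitionPoint β ε)) x|
        ≤ layerConst β C₀ * (1 + ε ^ ((2:ℝ) - m / 2)) ∧
      |iteratedDeriv m (fun y => f y - regularPart f (transitionPoint β ε) y) x|
        ≤ layerConst β C₀ * ε ^ (-(m:ℝ)/2) * Bfun β ε x := by
  set a := transitionPoint β ε
  have hv : regularPart f a =ᶠ[𝓝 x] f := by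
    filter_upwards [Ioo_mem_nhds hx.1 hx.2] with y hy
      using regularPart.eq_of_mem_Icc (Ioo_subset_Icc_self hy)
  have hw : (fun y => f y - regularPart f a y) =ᶠ[𝓝 x] fun _ => 0 :=
    hv.mono fun y hy => by simp only [hy, sub_self]
  rw [hv.iteratedDeriv_eq, hw.iteratedDeriv_eq, iteratedDeriv_const]
  have hC₀ := hf.nonneg
  have hK := one_le_layerConst_factor β
  have := Bfun_pos β ε x
  constructor
  · calc _ ≤ 2 * C₀ * (1 + ε ^ ((2:ℝ) - m / 2)) :=
          hf.abs_iteratedDeriv_le_of_mem_Icc hβ hε hε1 hm (Ioo_subset_Icc_self hx)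
      _ ≤ layerConst β C₀ * (1 + ε ^ ((2:ℝ) - m / 2)) := by
          have := rpow_pos_of_pos hε ((2:ℝ) - m / 2)
          unfold layerConst
          gcongr ?_ * _
          nlinarith
  · split_ifs <;> simp only [abs_zero] <;> unfold layerConst <;> positivity

theorem abs_iteratedDeriv_regularPart_le (hf : HasLayerBounds β ε C₀ f)
    (hf6 : ContDiff ℝ 6 f) (hβ : 0 < β) (hε : 0 < ε) (hε1 : ε ≤ 1)
    (ha : transitionPoint β ε ≤ 1 / 4) {m : ℕ} (hm : m ≤ 6) {x : ℝ}
    (hx : x ∈ Icc (0:ℝ) 1) (hxa : x ≠ transitionPoint β ε) (hxb : x ≠ 1 - transitionPoint β ε) :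
    |iteratedDeriv m (regularPart f (transitionPoint β ε)) x|
        ≤ layerConst β C₀ * (1 + ε ^ ((2:ℝ) - m / 2)) ∧
      |iteratedDeriv m (fun y => f y - regularPart f (transitionPoint β ε) y) x|
        ≤ layerConst β C₀ * ε ^ (-(m:ℝ)/2) * Bfun β ε x := by
  set a := transitionPoint β ε
  rcases hxa.lt_or_gt with hxa | hxa
  · exact hf.abs_iteratedDeriv_regularPart_le_of_lt hf6 hβ hε hε1 ha hm hx.1 hxa
  rcases hxb.lt_or_gt with hxb | hxb
  · exact hf.abs_iteratedDeriv_regularPart_le_of_mem_Ioo hβ hε hε1 hm ⟨hxa, hxb⟩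
  set g := fun y => f (1 - y)
  have hsymm : a ≤ 1 - a := by linarith
  have hv : regularPart f a = fun y => regularPart g a (1 - y) :=
    funext fun y => (regularPart.comp_one_sub hsymm y).symm
  have hw : (fun y => f y - regularPart f a y) =
      fun y => (fun z => g z - regularPart g a z) (1 - y) := by
    rw [hv]; simp only [g, sub_sub_cancel]
  have hg := hf.comp_one_sub.abs_iteratedDeriv_regularPart_le_of_lt
    (hf6.comp (contDiff_const.sub contDiff_id)) hβ hε hε1 ha hm (by linarith [hx.2])
    (by linarith : 1 - x < a)
  rw [hw, hv, iteratedDeriv_comp_const_sub m (regularPart g a),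
    iteratedDeriv_comp_const_sub m (fun z => g z - regularPart g a z)]
  simpa only [smul_eq_mul, abs_mul, abs_pow, abs_neg, abs_one, one_pow, one_mul,
    Bfun_one_sub] using hg

end HasLayerBounds

theorem stmt_9_general
    (M : ℕ)
    (βs β : ℝ) (hβ : β ∈ Set.Ioo (0:ℝ) βs)
    (C₀ : ℝ) :
    ∃ C : ℝ, ∀ ε ∈ Set.Ioc (0:ℝ) 1, ∀ Δt : ℝ, 0 < Δt →
    ∀ uhat : ℝ → Fin M → ℝ,
      (∀ j, ContDiff ℝ 6 (fun x => uhat x j)) →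
      (∀ k : ℕ, k ≤ 6 → ∀ j, ∀ x ∈ Set.Icc (0:ℝ) 1,
        |iteratedDeriv k (fun z => uhat z j) x|
          ≤ C₀ * (1 + ε ^ (-(k:ℝ)/2) * Bfun β ε x)) →
      4 * Real.sqrt (ε/β) * Real.log (1/Real.sqrt ε) ≤ 1/4 →
      ∃ vhat what : ℝ → Fin M → ℝ,
        (∀ x j, uhat x j = vhat x j + what x j) ∧
        (∀ j, ∀ x ∈ Set.Icc (0:ℝ) (4 * Real.sqrt (ε/β) * Real.log (1/Real.sqrt ε)),
          vhat x j = ∑ ν ∈ Finset.range 5,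
            (x - 4 * Real.sqrt (ε/β) * Real.log (1/Real.sqrt ε))^ν / (ν.factorial : ℝ)
              * iteratedDeriv ν (fun z => uhat z j)
                  (4 * Real.sqrt (ε/β) * Real.log (1/Real.sqrt ε))) ∧
        (∀ j, ∀ x ∈ Set.Icc (4 * Real.sqrt (ε/β) * Real.log (1/Real.sqrt ε))
            (1 - 4 * Real.sqrt (ε/β) * Real.log (1/Real.sqrt ε)),
          vhat x j = uhat x j) ∧
        (∀ j, ∀ x ∈ Set.Icc (1 - 4 * Real.sqrt (ε/β) * Real.log (1/Real.sqrt ε)) (1:ℝ),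
          vhat x j = ∑ ν ∈ Finset.range 5,
            (x - (1 - 4 * Real.sqrt (ε/β) * Real.log (1/Real.sqrt ε)))^ν / (ν.factorial : ℝ)
              * iteratedDeriv ν (fun z => uhat z j)
                  (1 - 4 * Real.sqrt (ε/β) * Real.log (1/Real.sqrt ε))) ∧
        (∀ m : ℕ, m ≤ 6 → ∀ j, ∀ x ∈ Set.Icc (0:ℝ) 1,
          x ≠ 4 * Real.sqrt (ε/β) * Real.log (1/Real.sqrt ε) →
          x ≠ 1 - 4 * Real.sqrt (ε/β) * Real.log (1/Real.sqrt ε) →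
          |iteratedDeriv m (fun z => vhat z j) x| ≤ C * (1 + ε ^ ((2:ℝ) - (m:ℝ)/2)) ∧
          |iteratedDeriv m (fun z => what z j) x| ≤ C * ε ^ (-(m:ℝ)/2) * Bfun β ε x) := by
  refine ⟨layerConst β C₀, fun ε ⟨hε, hε1⟩ _ _ uhat hu hubd ha => ?_⟩
  have hf : ∀ j, HasLayerBounds β ε C₀ (fun z => uhat z j) :=
    fun j k hk x hx => hubd k hk j x hx
  have hsymm : transitionPoint β ε ≤ 1 - transitionPoint β ε := by
    unfold transitionPoint; linarith
  exact ⟨fun x j => regularPart (fun z => uhat z j) (transitionPoint β ε) x,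
    fun x j => uhat x j - regularPart (fun z => uhat z j) (transitionPoint β ε) x,
    fun x j => by ring,
    fun j x hx => regularPart.eq_taylorPoly_of_le hsymm hx.2,
    fun j x hx => regularPart.eq_of_mem_Icc hx,
    fun j x hx => regularPart.eq_taylorPoly_of_ge hsymm hx.1,
    fun m hm j x hx hxa hxb =>
      (hf j).abs_iteratedDeriv_regularPart_le (hu j) hβ.1 hε hε1 ha hm hx hxa hxb⟩

/-- Shishkin-type decomposition `û^{n+1} = v̂^{n+1} + ŵ^{n+1}` of the semidiscrete
solution into a regular part (degree-4 Taylor polynomials near the boundary,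
`û^{n+1}` itself in the interior) and a layer part, with ε-uniform bounds. -/
theorem stmt_9
    (M : ℕ) (hM : 2 ≤ M)
    (βs β : ℝ) (hβ : β ∈ Set.Ioo (0:ℝ) βs)
    (C₀ : ℝ) (hC₀ : 0 < C₀) :
    ∃ C : ℝ, ∀ ε ∈ Set.Ioc (0:ℝ) 1, ∀ Δt : ℝ, 0 < Δt →
    ∀ uhat : ℝ → Fin M → ℝ,
      (∀ j, ContDiff ℝ 6 (fun x => uhat x j)) →
      (∀ k : ℕ, k ≤ 6 → ∀ j, ∀ x ∈ Set.Icc (0:ℝ) 1,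
        |iteratedDeriv k (fun z => uhat z j) x|
          ≤ C₀ * (1 + ε ^ (-(k:ℝ)/2) * Bfun β ε x)) →
      4 * Real.sqrt (ε/β) * Real.log (1/Real.sqrt ε) ≤ 1/4 →
      ∃ vhat what : ℝ → Fin M → ℝ,
        (∀ x j, uhat x j = vhat x j + what x j) ∧
        (∀ j, ∀ x ∈ Set.Icc (0:ℝ) (4 * Real.sqrt (ε/β) * Real.log (1/Real.sqrt ε)),
          vhat x j = ∑ ν ∈ Finset.range 5,
            (x - 4 * Real.sqrt (ε/β) * Real.log (1/Real.sqrt ε))^ν / (ν.factorial : ℝ)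
              * iteratedDeriv ν (fun z => uhat z j)
                  (4 * Real.sqrt (ε/β) * Real.log (1/Real.sqrt ε))) ∧
        (∀ j, ∀ x ∈ Set.Icc (4 * Real.sqrt (ε/β) * Real.log (1/Real.sqrt ε))
            (1 - 4 * Real.sqrt (ε/β) * Real.log (1/Real.sqrt ε)),
          vhat x j = uhat x j) ∧
        (∀ j, ∀ x ∈ Set.Icc (1 - 4 * Real.sqrt (ε/β) * Real.log (1/Real.sqrt ε)) (1:ℝ),
          vhat x j = ∑ ν ∈ Finset.range 5,
            (x - (1 - 4 * Real.sqrt (ε/β) * Real.log (1/Real.sqrt ε)))^ν / (ν.factorial : ℝ)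
              * iteratedDeriv ν (fun z => uhat z j)
                  (1 - 4 * Real.sqrt (ε/β) * Real.log (1/Real.sqrt ε))) ∧
        (∀ m : ℕ, m ≤ 6 → ∀ j, ∀ x ∈ Set.Icc (0:ℝ) 1,
          x ≠ 4 * Real.sqrt (ε/β) * Real.log (1/Real.sqrt ε) →
          x ≠ 1 - 4 * Real.sqrt (ε/β) * Real.log (1/Real.sqrt ε) →
          |iteratedDeriv m (fun z => vhat z j) x| ≤ C * (1 + ε ^ ((2:ℝ) - (m:ℝ)/2)) ∧
          |iteratedDeriv m (fun z => what z j) x| ≤ C * ε ^ (-(m:ℝ)/2) * Bfun β ε x) :=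
  stmt_9_general M βs β hβ C₀
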